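/- Dynamic energization conserves the dynamic energy: for a reference trajectory x̃ with relative velocity ẋ_rel = ẋ - ẋ̃, set α = -(ẋ_relᵀ M ẋ_rel)⁻¹ ẋ_relᵀ (M(h + ẍ̃) - f). Then the system ẍ = -h - α ẋ_rel satisfies ẋ_relᵀ (M(ẍ - ẍ̃) + f) = 0, i.e., the rate of change of the dynamic Hamiltonian vanishes. -/

import Mathlib

open Matrix

theorem dotProduct_neg_sub_smul_mulVec_eq_zero {K ι : Type*} [Field K] [Fintype ι]
    (M : Matrix ι ι K) (v g : ι → K) (hv : v ⬝ᵥ (M *ᵥ v) ≠ 0) :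
    v ⬝ᵥ (-g - (-(v ⬝ᵥ (M *ᵥ v))⁻¹ * (v ⬝ᵥ g)) • (M *ᵥ v)) = 0 := by
  rw [dotProduct_sub, dotProduct_neg, dotProduct_smul, smul_eq_mul]
  field_simp
  ring

theorem mulVec_neg_sub_smul_add {K ι : Type*} [CommRing K] [Fintype ι]
    (M : Matrix ι ι K) (a b v f : ι → K) (c : K) :
    M *ᵥ ((-a - c • v) - b) + f = -(M *ᵥ (a + b) - f) - c • (M *ᵥ v) := by
  rw [show (-a - c • v) - b = -(a + b) - c • v by abel, mulVec_sub, mulVec_neg, mulVec_smul]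
  abel

theorem dynamic_energization_conserves_energy_general {n : ℕ}
    (M : Matrix (Fin n) (Fin n) ℝ)
    (f h xdot xtdot xtddot : Fin n → ℝ)
    (hne : (xdot - xtdot) ⬝ᵥ (M *ᵥ (xdot - xtdot)) ≠ 0) :
    let xrel : Fin n → ℝ := xdot - xtdot
    let α : ℝ := -(xrel ⬝ᵥ (M *ᵥ xrel))⁻¹ * (xrel ⬝ᵥ (M *ᵥ (h + xtddot) - f))
    let xddot : Fin n → ℝ := -h - α • xrel
    xrel ⬝ᵥ (M *ᵥ (xddot - xtddot) + f) = 0 := by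
  intro xrel α xddot
  rw [mulVec_neg_sub_smul_add]
  exact dotProduct_neg_sub_smul_mulVec_eq_zero M xrel _ hne

/-- Dynamic energization conserves the dynamic energy:
with `ẋ_rel = ẋ - ẋ̃`, `α = -(ẋ_relᵀMẋ_rel)⁻¹ ẋ_relᵀ(M(h+ẍ̃) - f)` and
`ẍ = -h - α • ẋ_rel`, the dynamic energy rate `ẋ_relᵀ(M(ẍ - ẍ̃) + f)` is zero. -/
theorem dynamic_energization_conserves_energy {n : ℕ}
    (M : Matrix (Fin n) (Fin n) ℝ) (hM : M.IsSymm)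
    (f h xdot xtdot xtddot : Fin n → ℝ)
    (hne : (xdot - xtdot) ⬝ᵥ (M *ᵥ (xdot - xtdot)) ≠ 0) :
    let xrel : Fin n → ℝ := xdot - xtdot
    let α : ℝ := -(xrel ⬝ᵥ (M *ᵥ xrel))⁻¹ * (xrel ⬝ᵥ (M *ᵥ (h + xtddot) - f))
    let xddot : Fin n → ℝ := -h - α • xrel
    xrel ⬝ᵥ (M *ᵥ (xddot - xtddot) + f) = 0 :=
  dynamic_energization_conserves_energy_general M f h xdot xtdot xtddot hne
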